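/- arXiv:1811.04559 — 2 statements merged into one kernel-verified Lean document; each statement's English description precedes it below -/
import Mathlib

section
/- Let (L, ε, ∧_ε, ∨_ε) be a canonical ℰ-lattice whose lattice of fixed points Fix ε = {a₁, a₂, …, aₙ} is finite and totally ordered. Then Aut_ℰ(L) is isomorphic, as a group, to the direct product ∏_{i=1}^{n} S'([aᵢ]), where S'([aᵢ]) is the subgroup of the symmetric group on the class [aᵢ] consisting of the permutations of [aᵢ] fixing aᵢ. -/
/-- A canonical ℰ-lattice: a set `L` with a map `eps : L → L` and two associative,
commutative binary operations satisfying `a ∧ a = a ∨ a = ε a`,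
the absorption laws `a ∧ (a ∨ b) = a ∨ (a ∧ b) = ε a`, and (canonicity)
all meets and joins are fixed points of `eps`. -/
structure CELattice (L : Type*) where
  eps : L → L
  meet : L → L → L
  join : L → L → L
  meet_assoc : ∀ a b c, meet a (meet b c) = meet (meet a b) c
  join_assoc : ∀ a b c, join a (join b c) = join (join a b) c
  meet_comm : ∀ a b, meet a b = meet b a
  join_comm : ∀ a b, join a b = join b a
  meet_self : ∀ a, meet a a = eps a
  join_self : ∀ a, join a a = eps a
  meet_absorb : ∀ a b, meet a (join a b) = eps a
  join_absorb : ∀ a b, join a (meet a b) = eps a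
  meet_canonical : ∀ a b, eps (meet a b) = meet a b
  join_canonical : ∀ a b, eps (join a b) = join a b

namespace CELattice

variable {L : Type*}

/-- The set of fixed points of `eps`. -/
def Fix (E : CELattice L) : Set L := {a | E.eps a = a}

/-- The class `[a] = {b | ε b = ε a}`. -/
def cls (E : CELattice L) (a : L) : Set L := {b | E.eps b = E.eps a}

/-- The fixed points of `eps`, as a type. -/
abbrev FixT (E : CELattice L) : Type _ := {a : L // E.eps a = a}

/-- An ℰ-lattice isomorphism: a bijection commuting with `eps` and preserving
meets and joins. -/
def IsEIso {L₁ L₂ : Type*} (E₁ : CELattice L₁) (E₂ : CELattice L₂) (f : L₁ → L₂) : Prop :=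
  Function.Bijective f ∧ (∀ a, f (E₁.eps a) = E₂.eps (f a)) ∧
    (∀ a b, f (E₁.meet a b) = E₂.meet (f a) (f b)) ∧
    (∀ a b, f (E₁.join a b) = E₂.join (f a) (f b))

end CELattice

namespace CELattice

variable {L : Type*}

/-- The group `Aut_ℰ(L)` of ℰ-lattice automorphisms of a canonical ℰ-lattice,
as a subgroup of the symmetric group on `L`. -/
def EAut (E : CELattice L) : Subgroup (Equiv.Perm L) where
  carrier := {f : Equiv.Perm L | (∀ a, f (E.eps a) = E.eps (f a)) ∧
    (∀ a b, f (E.meet a b) = E.meet (f a) (f b)) ∧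
    (∀ a b, f (E.join a b) = E.join (f a) (f b))}
  one_mem' := by simp
  mul_mem' := by
    rintro f g ⟨hf1, hf2, hf3⟩ ⟨hg1, hg2, hg3⟩
    refine ⟨fun a => ?_, fun a b => ?_, fun a b => ?_⟩ <;>
      simp [Equiv.Perm.mul_apply, hg1, hg2, hg3, hf1, hf2, hf3]
  inv_mem' := by
    rintro f ⟨hf1, hf2, hf3⟩
    refine ⟨fun a => ?_, fun a b => ?_, fun a b => ?_⟩ <;>
      (apply f.injective;
       simp [hf1, hf2, hf3, Equiv.apply_symm_apply])

/-- The meet of two fixed points, as a fixed point (the lattice operation on `Fix ε`). -/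
def fixMeet (E : CELattice L) (a b : E.FixT) : E.FixT :=
  ⟨E.meet a.1 b.1, E.meet_canonical _ _⟩

/-- The join of two fixed points, as a fixed point (the lattice operation on `Fix ε`). -/
def fixJoin (E : CELattice L) (a b : E.FixT) : E.FixT :=
  ⟨E.join a.1 b.1, E.join_canonical _ _⟩

/-- The group `Aut(Fix ε)` of lattice automorphisms of the lattice of fixed points. -/
def AutFix (E : CELattice L) : Subgroup (Equiv.Perm E.FixT) where
  carrier := {σ : Equiv.Perm E.FixT | (∀ a b, σ (E.fixMeet a b) = E.fixMeet (σ a) (σ b)) ∧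
    (∀ a b, σ (E.fixJoin a b) = E.fixJoin (σ a) (σ b))}
  one_mem' := by simp
  mul_mem' := by
    rintro f g ⟨hf1, hf2⟩ ⟨hg1, hg2⟩
    refine ⟨fun a b => ?_, fun a b => ?_⟩ <;>
      simp [Equiv.Perm.mul_apply, hg1, hg2, hf1, hf2]
  inv_mem' := by
    rintro f ⟨hf1, hf2⟩
    refine ⟨fun a b => ?_, fun a b => ?_⟩ <;>
      (apply f.injective; simp [hf1, hf2, Equiv.apply_symm_apply])

/-- `S'([a])`: the subgroup of the symmetric group on the class `[a]`
consisting of the permutations fixing `a`. -/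
def Sprime (E : CELattice L) (a : L) : Subgroup (Equiv.Perm {b : L // E.eps b = E.eps a}) where
  carrier := {σ | σ ⟨a, rfl⟩ = ⟨a, rfl⟩}
  one_mem' := by simp
  mul_mem' := by
    intro f g hf hg
    simp only [Set.mem_setOf_eq] at *
    simp [Equiv.Perm.mul_apply, hg, hf]
  inv_mem' := by
    intro f hf
    simp only [Set.mem_setOf_eq] at *
    rw [Equiv.Perm.inv_eq_iff_eq, hf]

end CELattice

/-!
An automorphism `f` of `L` restricts to an order automorphism of `Fix ε`, ordered by
`a ≤ b ↔ a ∧_ε b = a`. A finite chain has no nontrivial order automorphisms, so `f` fixes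
`Fix ε` pointwise, and then `ε (f b) = f (ε b) = ε b`: `f` maps each class `[a]` onto itself,
fixing `a`. Conversely, meets and joins only depend on the classes of their arguments
(`ε a ∧_ε ε b = a ∧_ε b`) and are fixed points, so any family of permutations of the classes
fixing their representatives glues to an automorphism of `L`.
-/

namespace CELattice

variable {L : Type*} (E : CELattice L)

def dual : CELattice L where
  eps := E.eps
  meet := E.join
  join := E.meet
  meet_assoc := E.join_assoc
  join_assoc := E.meet_assoc
  meet_comm := E.join_comm
  join_comm := E.meet_comm
  meet_self := E.join_self
  join_self := E.meet_self
  meet_absorb := E.join_absorb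
  join_absorb := E.meet_absorb
  meet_canonical := E.join_canonical
  join_canonical := E.meet_canonical

lemma eps_eps (a : L) : E.eps (E.eps a) = E.eps a := by
  rw [← E.meet_self a, E.meet_canonical]

lemma meet_eps_right_self (a : L) : E.meet a (E.eps a) = E.eps a := by
  simpa only [E.join_self] using E.meet_absorb a a

lemma meet_meet_self (a b : L) : E.meet a (E.meet a b) = E.meet a b := by
  -- `ε a = a ∨_ε (a ∧_ε b)`, so absorption gives `ε a ∧_ε (a ∧_ε b) = ε (a ∧_ε b)`
  have h : E.meet (E.eps a) (E.meet a b) = E.meet a b := by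
    rw [← E.join_absorb a b, E.meet_comm, E.join_comm, E.meet_absorb, E.meet_canonical]
  calc E.meet a (E.meet a b) = E.meet a (E.meet (E.eps a) (E.meet a b)) := by rw [h]
    _ = E.meet (E.eps a) (E.meet a b) := by rw [E.meet_assoc, E.meet_eps_right_self]
    _ = E.meet a b := h

lemma meet_eps_left (a b : L) : E.meet (E.eps a) b = E.meet a b := by
  rw [← E.meet_self a, ← E.meet_assoc, E.meet_meet_self]

lemma meet_eps_eps (a b : L) : E.meet (E.eps a) (E.eps b) = E.meet a b := by
  rw [E.meet_eps_left, E.meet_comm, E.meet_eps_left, E.meet_comm]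

lemma join_eps_eps (a b : L) : E.join (E.eps a) (E.eps b) = E.join a b :=
  E.dual.meet_eps_eps a b

@[reducible]
def fixPartialOrder : PartialOrder E.FixT where
  le a b := E.meet a b = a
  le_refl a := by rw [E.meet_self, a.2]
  le_trans a b c hab hbc := by
    rw [← hab, ← E.meet_assoc, hbc]
  le_antisymm a b hab hba := Subtype.ext <| by
    rw [← hab, E.meet_comm]
    exact hba

@[reducible]
noncomputable def fixLinearOrder
    (hchain : ∀ a b : L, E.eps a = a → E.eps b = b → E.meet a b = a ∨ E.meet a b = b) :
    LinearOrder E.FixT :=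
  { E.fixPartialOrder with
    le_total := fun a b => (hchain a b a.2 b.2).imp id fun h => (E.meet_comm b a).trans h
    toDecidableLE := Classical.decRel _ }

variable {E}

lemma eps_apply_eq_self_iff_of_mem_eaut {f : Equiv.Perm L} (hf : f ∈ E.EAut) (a : L) :
    E.eps (f a) = f a ↔ E.eps a = a := by
  rw [← hf.1, f.injective.eq_iff]

def fixOrderIsoOfMemEAut {f : Equiv.Perm L} (hf : f ∈ E.EAut) :
    @OrderIso E.FixT E.FixT E.fixPartialOrder.toLE E.fixPartialOrder.toLE where
  toEquiv := f.subtypePerm (eps_apply_eq_self_iff_of_mem_eaut hf)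
  map_rel_iff' {a b} := by
    change E.meet (f a) (f b) = f a ↔ E.meet a b = a
    rw [← hf.2.1, f.injective.eq_iff]

theorem apply_eq_self_of_mem_eaut [Finite E.FixT]
    (hchain : ∀ a b : L, E.eps a = a → E.eps b = b → E.meet a b = a ∨ E.meet a b = b)
    {f : Equiv.Perm L} (hf : f ∈ E.EAut) {a : L} (ha : a ∈ E.Fix) : f a = a := by
  let _ := E.fixLinearOrder hchain
  let σ : E.FixT ≃o E.FixT := fixOrderIsoOfMemEAut hf
  exact congrArg Subtype.val (DFunLike.congr_fun (Subsingleton.elim σ (OrderIso.refl _)) ⟨a, ha⟩)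

variable (E)

def classStabilizer : Subgroup (Equiv.Perm L) where
  carrier := {f | (∀ b, E.eps (f b) = E.eps b) ∧ ∀ a ∈ E.Fix, f a = a}
  one_mem' := ⟨fun _ => rfl, fun _ _ => rfl⟩
  mul_mem' {f g} hf hg := ⟨fun b => (hf.1 (g b)).trans (hg.1 b),
    fun a ha => (congrArg f (hg.2 a ha)).trans (hf.2 a ha)⟩
  inv_mem' {f} hf := ⟨fun b => by simpa using (hf.1 (f⁻¹ b)).symm,
    fun a ha => by rw [Equiv.Perm.inv_eq_iff_eq, hf.2 a ha]⟩

theorem classStabilizer_le_eaut : E.classStabilizer ≤ E.EAut := by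
  rintro f ⟨hclass, hfix⟩
  refine ⟨fun a => ?_, fun a b => ?_, fun a b => ?_⟩
  · rw [hfix _ (E.eps_eps a), hclass]
  · rw [hfix _ (E.meet_canonical a b), ← E.meet_eps_eps (f a), hclass, hclass, E.meet_eps_eps]
  · rw [hfix _ (E.join_canonical a b), ← E.join_eps_eps (f a), hclass, hclass, E.join_eps_eps]

theorem eaut_eq_classStabilizer [Finite E.FixT]
    (hchain : ∀ a b : L, E.eps a = a → E.eps b = b → E.meet a b = a ∨ E.meet a b = b) :
    E.EAut = E.classStabilizer := by
  refine le_antisymm (fun f hf => ⟨fun b => ?_, fun a ha => ?_⟩) E.classStabilizer_le_eaut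
  · rw [← hf.1, apply_eq_self_of_mem_eaut hchain hf (E.eps_eps b)]
  · exact apply_eq_self_of_mem_eaut hchain hf ha

def toFix (b : L) : E.FixT := ⟨E.eps b, E.eps_eps b⟩

def sigmaClassEquiv : (Σ a : E.FixT, {b // E.eps b = E.eps (a : L)}) ≃ L :=
  (Equiv.sigmaCongrRight fun a => Equiv.subtypeEquivRight fun b => by
    rw [a.2, toFix, Subtype.ext_iff]).trans (Equiv.sigmaFiberEquiv E.toFix)

def glueClassPerms (σ : ∀ a : E.FixT, Equiv.Perm {b // E.eps b = E.eps (a : L)}) :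
    Equiv.Perm L :=
  E.sigmaClassEquiv.permCongr (Equiv.sigmaCongrRight σ)

lemma glueClassPerms_apply (σ : ∀ a : E.FixT, Equiv.Perm {b // E.eps b = E.eps (a : L)})
    {a : E.FixT} (b : {b // E.eps b = E.eps (a : L)}) : E.glueClassPerms σ b = σ a b := by
  change E.glueClassPerms σ (E.sigmaClassEquiv ⟨a, b⟩) = _
  rw [glueClassPerms, Equiv.permCongr_apply, Equiv.symm_apply_apply]
  rfl

lemma glueClassPerms_mem_classStabilizer
    (σ : ∀ a : E.FixT, Equiv.Perm {b // E.eps b = E.eps (a : L)})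
    (hσ : ∀ a : E.FixT, σ a ∈ E.Sprime (a : L)) : E.glueClassPerms σ ∈ E.classStabilizer := by
  refine ⟨fun b => ?_, fun a ha => ?_⟩
  · rw [E.glueClassPerms_apply σ (a := E.toFix b) ⟨b, (E.eps_eps b).symm⟩]
    exact (σ _ _).2.trans (E.eps_eps b)
  · rw [E.glueClassPerms_apply σ (a := ⟨a, ha⟩) ⟨a, rfl⟩, hσ ⟨a, ha⟩]

def classStabilizerEquiv : E.classStabilizer ≃* ∀ a : E.FixT, E.Sprime (a : L) where
  toFun f a := ⟨(f : Equiv.Perm L).subtypePerm fun b => by rw [f.2.1 b],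
    Subtype.ext (f.2.2 a a.2)⟩
  invFun σ := ⟨E.glueClassPerms fun a => σ a,
    E.glueClassPerms_mem_classStabilizer _ fun a => (σ a).2⟩
  left_inv f := Subtype.ext <| Equiv.ext fun b =>
    E.glueClassPerms_apply _ (a := E.toFix b) ⟨b, (E.eps_eps b).symm⟩
  right_inv σ := funext fun a => Subtype.ext <| Equiv.ext fun b =>
    Subtype.ext (E.glueClassPerms_apply _ b)
  map_mul' _ _ := rfl

end CELattice

open CELattice in
theorem eaut_iso_of_finite_chain_fix_general {L : Type*} (E : CELattice L)
    (hfin : Finite E.FixT)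
    (hchain : ∀ a b : L, E.eps a = a → E.eps b = b → E.meet a b = a ∨ E.meet a b = b) :
    Nonempty (EAut E ≃* ∀ a : E.FixT, Sprime E (a : L)) :=
  ⟨(MulEquiv.subgroupCongr (E.eaut_eq_classStabilizer hchain)).trans E.classStabilizerEquiv⟩

open CELattice in
/-- Corollary 2 (2.1): if the lattice of fixed points of a canonical ℰ-lattice is finite
and fully (totally) ordered, then `Aut_ℰ(L) ≅ ∏_{i=1}^{n} S'([aᵢ])`. -/
theorem eaut_iso_of_finite_chain_fix {L : Type*} [Nonempty L] (E : CELattice L)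
    (hfin : Finite E.FixT)
    (hchain : ∀ a b : L, E.eps a = a → E.eps b = b → E.meet a b = a ∨ E.meet a b = b) :
    Nonempty (EAut E ≃* ∀ a : E.FixT, Sprime E (a : L)) :=
  eaut_iso_of_finite_chain_fix_general E hfin hchain
end

section
/- Let G₁ and G₂ be finite groups, Φ(G₁) and Φ(G₂) their Frattini subgroups, and f : L(G₁) → L(G₂) an ℰL-isomorphism. If G₁ is nilpotent, then f(Φ(G₁)) ⊇ Φ(G₂). -/
/-!
Restricted to normal subgroups, an ℰL-isomorphism `f` is an order isomorphism onto the normal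
subgroups of `G₂` fixing `⊤`. In a nilpotent group every maximal subgroup `M` is normal, so
`f M` is a maximal normal subgroup of `G₂`; it is then the normal core of any maximal subgroup
above it, hence contains `Φ(G₂)`. The normal subgroup `P` with `f P = Φ(G₂)` therefore lies
in every maximal subgroup of `G₁`, i.e. `P ≤ Φ(G₁)`, and monotonicity gives the claim.
-/

/-- An ℰL-isomorphism from a group `G₁` to a group `G₂`: a bijection between the subgroup
lattices which commutes with taking normal cores and preserves the ℰ-lattice meet
`H ∧ K = H_G ∩ K_G` and join `H ∨ K = H_G K_G` (the join of the two normal cores). -/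
def IsELIso {G₁ G₂ : Type*} [Group G₁] [Group G₂] (f : Subgroup G₁ → Subgroup G₂) : Prop :=
  Function.Bijective f ∧
    (∀ H : Subgroup G₁, f H.normalCore = (f H).normalCore) ∧
    (∀ H K : Subgroup G₁,
      f (H.normalCore ⊓ K.normalCore) = (f H).normalCore ⊓ (f K).normalCore) ∧
    (∀ H K : Subgroup G₁,
      f (H.normalCore ⊔ K.normalCore) = (f H).normalCore ⊔ (f K).normalCore)

namespace IsELIso

open Subgroup

variable {G₁ G₂ : Type*} [Group G₁] [Group G₂] {f : Subgroup G₁ → Subgroup G₂}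

theorem normal_map_iff (hf : IsELIso f) {H : Subgroup G₁} : (f H).Normal ↔ H.Normal := by
  have hcore : f H.normalCore = (f H).normalCore := hf.2.1 H
  refine ⟨fun hfH => ?_, fun hH => ?_⟩
  · rw [normalCore_eq_self (f H)] at hcore
    rw [← hf.1.1 hcore]
    exact normalCore_normal H
  · rw [normalCore_eq_self H] at hcore
    rw [hcore]
    exact normalCore_normal (f H)

theorem map_inf_of_normal (hf : IsELIso f) {H K : Subgroup G₁} [H.Normal] [K.Normal] :
    f (H ⊓ K) = f H ⊓ f K := by
  have : (f H).Normal := hf.normal_map_iff.2 ‹_›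
  have : (f K).Normal := hf.normal_map_iff.2 ‹_›
  simpa only [normalCore_eq_self] using hf.2.2.1 H K

theorem map_le_map_iff_of_normal (hf : IsELIso f) {H K : Subgroup G₁} [H.Normal] [K.Normal] :
    f H ≤ f K ↔ H ≤ K := by
  rw [← inf_eq_left, ← inf_eq_left, ← hf.map_inf_of_normal, hf.1.1.eq_iff]

theorem map_top (hf : IsELIso f) : f ⊤ = ⊤ := by
  obtain ⟨H, hH⟩ := hf.1.2 ⊤
  have : H.Normal := hf.normal_map_iff.1 (hH ▸ inferInstance)
  exact top_unique (hH ▸ hf.map_le_map_iff_of_normal.2 le_top)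

theorem eq_map_of_isCoatom_of_map_le (hf : IsELIso f) {M : Subgroup G₁} (hM : IsCoatom M)
    [M.Normal] {K : Subgroup G₂} [K.Normal] (hMK : f M ≤ K) (hK : K ≠ ⊤) : K = f M := by
  obtain ⟨L, rfl⟩ := hf.1.2 K
  have : L.Normal := hf.normal_map_iff.1 ‹_›
  rcases (hf.map_le_map_iff_of_normal.1 hMK).lt_or_eq with hML | rfl
  · exact absurd (hM.2 L hML ▸ hf.map_top) hK
  · rfl

theorem frattini_le_map_of_isCoatom [IsCoatomic (Subgroup G₂)] (hf : IsELIso f)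
    {M : Subgroup G₁} (hM : IsCoatom M) [M.Normal] : frattini G₂ ≤ f M := by
  have hfM : f M ≠ ⊤ := fun h => hM.1 (hf.1.1 (h.trans hf.map_top.symm))
  obtain ⟨M', hM', hMM'⟩ := (eq_top_or_exists_le_coatom (f M)).resolve_left hfM
  have : (f M).Normal := hf.normal_map_iff.2 ‹_›
  have hcore : M'.normalCore = f M :=
    hf.eq_map_of_isCoatom_of_map_le hM (normal_le_normalCore.2 hMM')
      fun h => hM'.1 (top_unique (h ▸ M'.normalCore_le))
  exact hcore ▸ normal_le_normalCore.2 (frattini_le_coatom hM')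

end IsELIso

theorem frattini_le_eliso_frattini_general {G₁ G₂ : Type*} [Group G₁] [Group G₂]
    [Finite G₂] [Group.IsNilpotent G₁]
    (f : Subgroup G₁ → Subgroup G₂) (hf : IsELIso f) :
    frattini G₂ ≤ f (frattini G₁) := by
  obtain ⟨P, hP⟩ := hf.1.2 (frattini G₂)
  have : P.Normal := hf.normal_map_iff.1 (hP ▸ inferInstance)
  have hPle : P ≤ frattini G₁ := le_iInf₂ fun M hM => by
    have : M.Normal :=
      Subgroup.NormalizerCondition.normal_of_coatom M Group.normalizerCondition_of_isNilpotent hM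
    exact hf.map_le_map_iff_of_normal.1 (hP ▸ hf.frattini_le_map_of_isCoatom hM)
  exact hP ▸ hf.map_le_map_iff_of_normal.2 hPle

/-- Proposition 2 (2.2): if `G₁, G₂` are finite groups, `G₁` is nilpotent and
`f : L(G₁) → L(G₂)` is an ℰL-isomorphism, then `f(Φ(G₁)) ⊇ Φ(G₂)`. -/
theorem frattini_le_eliso_frattini {G₁ G₂ : Type*} [Group G₁] [Group G₂]
    [Finite G₁] [Finite G₂] [Group.IsNilpotent G₁]
    (f : Subgroup G₁ → Subgroup G₂) (hf : IsELIso f) :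
    frattini G₂ ≤ f (frattini G₁) :=
  frattini_le_eliso_frattini_general f hf
end
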